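/- Let $k$ be a field and let $\varphi$ be a homogeneous polynomial of degree $d$ in $N+1$ variables over $k$, where $d \geq 3$ is a prime number. Suppose that $\varphi$ is isotropic over some finite field extension $K/k$ whose degree $n := [K:k] \geq 2$ is prime with $n \neq d$. Then there exists a finite field extension $L/k$ with $\gcd([L:k], nd) = 1$ and $[L:k] \leq nd-n-d$ such that $\varphi$ is isotropic over $L$. -/

import Mathlib

/-!
Write `K = k(θ)` and an isotropic vector as `w_i = G(θ) p_i(θ)` with `deg p_i < n` and the `p_i`
without common factor. Then `F(t) = φ(p(t))` vanishes at `θ`, and if `φ` is anisotropic over `k`,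
the coefficient of `t^{de}`, `e = max deg p_i`, is `φ` at the vector of those coefficients of the
`p_i`, so `deg F = de`. Hence `F = f g` with `f` the minimal polynomial of `θ` and
`deg g = de - n`. If every irreducible factor of `g` had degree divisible by `d` or `n`, then
`de = dx + n(y + 1)`, so `d ∣ y + 1` and `e ≥ n`, which is absurd. An irreducible factor `q` of
`g` of degree prime to `nd` gives `L = k[t]/(q)`, where `p(t)` is isotropic because `q` does not
divide all the `p_i`.
-/

open Polynomial

theorem Nat.Coprime.mul_add_mul_add_ne_mul_of_lt {d n e x y : ℕ} (hdn : d.Coprime n)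
    (he : e < n) : d * x + n * y + n ≠ d * e := by
  intro h
  have hd : d ∣ n * (y + 1) := (Nat.dvd_add_right (Dvd.intro x rfl)).mp
    (by rw [mul_add_one, ← add_assoc, h]; exact Dvd.intro e rfl)
  have hy : d ≤ y + 1 := Nat.le_of_dvd (Nat.succ_pos y) (hdn.dvd_of_dvd_mul_left hd)
  nlinarith

theorem Nat.Prime.add_add_one_le_mul {p q : ℕ} (hp : p.Prime) (hq : q.Prime) (hpq : p ≠ q) :
    p + q + 1 ≤ p * q := by
  have := hp.two_le
  have := hq.two_le
  rcases (by omega : 3 ≤ p ∨ 3 ≤ q) with h | h <;> nlinarith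

namespace Polynomial

section Coeff

variable {R ι : Type*} [CommSemiring R]

theorem coeff_prod_sum_of_natDegree_le (s : Finset ι) (f : ι → R[X]) (m : ι → ℕ)
    (h : ∀ i ∈ s, (f i).natDegree ≤ m i) :
    (∏ i ∈ s, f i).coeff (∑ i ∈ s, m i) = ∏ i ∈ s, (f i).coeff (m i) := by
  induction s using Finset.cons_induction with
  | empty => simp
  | cons i s his ih =>
    simp only [Finset.forall_mem_cons] at h
    rw [Finset.prod_cons, Finset.sum_cons, Finset.prod_cons,
      coeff_mul_add_eq_of_natDegree_le h.1
        ((natDegree_prod_le s f).trans (Finset.sum_le_sum h.2)), ih h.2]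

theorem natDegree_prod_pow_le {s : Finset ι} {p : ι → R[X]} {e : ℕ} (m : ι → ℕ)
    (hp : ∀ i ∈ s, (p i).natDegree ≤ e) :
    (∏ i ∈ s, p i ^ m i).natDegree ≤ (∑ i ∈ s, m i) * e := by
  rw [Finset.sum_mul]
  exact (natDegree_prod_le _ _).trans <| Finset.sum_le_sum fun i hi =>
    natDegree_pow_le.trans (Nat.mul_le_mul_left _ (hp i hi))

theorem coeff_prod_pow_of_natDegree_le {s : Finset ι} {p : ι → R[X]} {e : ℕ} (m : ι → ℕ)
    (hp : ∀ i ∈ s, (p i).natDegree ≤ e) :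
    (∏ i ∈ s, p i ^ m i).coeff ((∑ i ∈ s, m i) * e) = ∏ i ∈ s, (p i).coeff e ^ m i := by
  rw [Finset.sum_mul, coeff_prod_sum_of_natDegree_le s _ _ fun i hi =>
    natDegree_pow_le.trans (Nat.mul_le_mul_left _ (hp i hi))]
  exact Finset.prod_congr rfl fun i hi => coeff_pow_of_natDegree_le (hp i hi)

end Coeff

section Factor

variable {k : Type*} [Field k]

theorem exists_natDegree_eq_of_forall_irreducible_dvd {a b : ℕ} {g : k[X]} (hg : g ≠ 0)
    (h : ∀ q, Irreducible q → q ∣ g → a ∣ q.natDegree ∨ b ∣ q.natDegree) :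
    ∃ x y, g.natDegree = a * x + b * y := by
  induction g using WfDvdMonoid.induction_on_irreducible with
  | zero => exact absurd rfl hg
  | unit u hu => exact ⟨0, 0, by simp [natDegree_eq_zero_of_isUnit hu]⟩
  | mul g q hg0 hq ih =>
    obtain ⟨x, y, hxy⟩ := ih hg0 fun r hr hrg => h r hr (dvd_mul_of_dvd_right hrg q)
    rw [natDegree_mul hq.ne_zero hg0, hxy]
    rcases h q hq (dvd_mul_right q g) with ⟨c, hc⟩ | ⟨c, hc⟩
    · exact ⟨x + c, y, by rw [hc]; ring⟩
    · exact ⟨x, y + c, by rw [hc]; ring⟩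

theorem exists_irreducible_dvd_not_dvd_natDegree {d n e : ℕ} {g : k[X]} (hdn : d.Coprime n)
    (he : e < n) (hg : g ≠ 0) (hdeg : g.natDegree + n = d * e) :
    ∃ q, Irreducible q ∧ q ∣ g ∧ ¬ n ∣ q.natDegree ∧ ¬ d ∣ q.natDegree := by
  by_contra! h
  obtain ⟨x, y, hxy⟩ := exists_natDegree_eq_of_forall_irreducible_dvd hg fun q hq hqg =>
    or_iff_not_imp_right.mpr (h q hq hqg)
  exact hdn.mul_add_mul_add_ne_mul_of_lt he (hxy ▸ hdeg)

end Factor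

end Polynomial

theorem exists_powerBasis_of_finrank_prime {k K : Type*} [Field k] [Field K] [Algebra k K]
    [FiniteDimensional k K] (h : (Module.finrank k K).Prime) : Nonempty (PowerBasis k K) := by
  have := IntermediateField.isSimpleOrder_of_finrank_prime k K h
  obtain ⟨θ, -, hθ⟩ := SetLike.exists_of_lt (bot_lt_top : (⊥ : IntermediateField k K) < ⊤)
  have hθ_top : IntermediateField.adjoin k {θ} = ⊤ := (eq_bot_or_eq_top _).resolve_left
    fun h' => hθ (h' ▸ IntermediateField.mem_adjoin_simple_self k θ)
  have hint := IsIntegral.of_finite k θ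
  exact ⟨PowerBasis.ofAdjoinEqTop' hint
    ((IntermediateField.adjoin_simple_eq_top_iff_of_isAlgebraic hint.isAlgebraic).mp hθ_top)⟩

namespace MvPolynomial

def IsIsotropic {k σ : Type*} [CommSemiring k] (K : Type*) [CommSemiring K] [Algebra k K]
    (φ : MvPolynomial σ k) : Prop :=
  ∃ w : σ → K, w ≠ 0 ∧ eval w (map (algebraMap k K) φ) = 0

theorem isIsotropic_self_iff {k σ : Type*} [CommSemiring k] {φ : MvPolynomial σ k} :
    φ.IsIsotropic k ↔ ∃ w : σ → k, w ≠ 0 ∧ eval w φ = 0 := by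
  simp [IsIsotropic]

variable {σ : Type*} {d e : ℕ}

section Homogeneous

variable {R : Type*} [CommSemiring R] {φ : MvPolynomial σ R} {p : σ → R[X]}

theorem IsHomogeneous.degree_of_mem_support (hφ : φ.IsHomogeneous d) {α : σ →₀ ℕ}
    (hα : α ∈ φ.support) : α.degree = d :=
  not_not.mp fun h => mem_support_iff.mp hα (hφ.coeff_eq_zero h)

theorem IsHomogeneous.eval_mul_left (hφ : φ.IsHomogeneous d) (a : R) (w : σ → R) :
    eval (fun i => a * w i) φ = a ^ d * eval w φ := by
  simp only [eval_eq, Finset.mul_sum, mul_pow, Finset.prod_mul_distrib,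
    Finset.prod_pow_eq_pow_sum]
  refine Finset.sum_congr rfl fun α hα => ?_
  rw [← Finsupp.degree_apply, hφ.degree_of_mem_support hα]
  ring

theorem IsHomogeneous.natDegree_aeval_le (hφ : φ.IsHomogeneous d)
    (hp : ∀ i, (p i).natDegree ≤ e) : (MvPolynomial.aeval p φ).natDegree ≤ d * e := by
  rw [aeval_def, eval₂_eq]
  refine natDegree_sum_le_of_forall_le _ _ fun α hα => ?_
  refine natDegree_C_mul_le _ _ |>.trans ?_
  rw [← hφ.degree_of_mem_support hα, Finsupp.degree_apply]
  exact natDegree_prod_pow_le _ fun i _ => hp i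

theorem IsHomogeneous.coeff_aeval_mul (hφ : φ.IsHomogeneous d)
    (hp : ∀ i, (p i).natDegree ≤ e) :
    (MvPolynomial.aeval p φ).coeff (d * e) = eval (fun i => (p i).coeff e) φ := by
  rw [aeval_def, eval₂_eq, eval_eq, finsetSum_coeff]
  refine Finset.sum_congr rfl fun α hα => ?_
  rw [← Polynomial.C_eq_algebraMap, Polynomial.coeff_C_mul, ← hφ.degree_of_mem_support hα,
    Finsupp.degree_apply, coeff_prod_pow_of_natDegree_le _ fun i _ => hp i]

end Homogeneous

theorem isIsotropic_adjoinRoot_of_dvd_aeval {R : Type*} [CommRing R] {φ : MvPolynomial σ R}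
    {p : σ → R[X]} {q : R[X]} (hq : ¬ ∀ i, q ∣ p i) (hqF : q ∣ MvPolynomial.aeval p φ) :
    φ.IsIsotropic (AdjoinRoot q) := by
  refine ⟨fun i => AdjoinRoot.mk q (p i), fun h => hq fun i => ?_, ?_⟩
  · exact AdjoinRoot.mk_eq_zero.mp (congrFun h i)
  · simp_rw [← AdjoinRoot.aeval_eq]
    rw [eval_map, ← aeval_def, ← comp_aeval_apply, AdjoinRoot.aeval_eq, AdjoinRoot.mk_eq_zero]
    exact hqF

variable {k K : Type*} [Field k] [Field K] [Algebra k K] [Fintype σ] {φ : MvPolynomial σ k}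

theorem IsHomogeneous.coeff_aeval_sup_ne_zero (hφ : φ.IsHomogeneous d)
    (haniso : ¬ φ.IsIsotropic k) {p : σ → k[X]} (hp : p ≠ 0) :
    (MvPolynomial.aeval p φ).coeff (d * Finset.univ.sup fun i => (p i).natDegree) ≠ 0 := by
  obtain ⟨j, -⟩ := Function.ne_iff.mp hp
  obtain ⟨i, -, hi⟩ := Finset.exists_mem_eq_sup Finset.univ ⟨j, Finset.mem_univ j⟩
    fun i => (p i).natDegree
  set e := Finset.univ.sup fun i => (p i).natDegree
  have hpe : ∀ i, (p i).natDegree ≤ e := fun i =>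
    Finset.le_sup (f := fun i => (p i).natDegree) (Finset.mem_univ i)
  rw [hφ.coeff_aeval_mul hpe]
  refine fun h => haniso (isIsotropic_self_iff.mpr ⟨_, fun hc => hp ?_, h⟩)
  have hpi : p i = 0 :=
    leadingCoeff_eq_zero.mp (by rw [leadingCoeff, ← hi]; exact congrFun hc i)
  have he0 : e = 0 := by rw [hi, hpi, natDegree_zero]
  refine _root_.funext fun j => ?_
  have hj0 : (p j).natDegree = 0 := by have := hpe j; omega
  rw [eq_C_of_natDegree_eq_zero hj0, ← he0]
  simpa using congrFun hc j

theorem IsIsotropic.exists_minpoly_dvd_aeval (hiso : φ.IsIsotropic K) (hφ : φ.IsHomogeneous d)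
    (pb : PowerBasis k K) :
    ∃ p : σ → k[X], (∀ i, (p i).natDegree < pb.dim) ∧ (∀ q, (∀ i, q ∣ p i) → IsUnit q) ∧
      minpoly k pb.gen ∣ MvPolynomial.aeval p φ := by
  classical
  obtain ⟨w, hw0, hw⟩ := hiso
  obtain ⟨j, hj⟩ := Function.ne_iff.mp hw0
  choose P hP_deg hP using fun i => pb.exists_eq_aeval (w i)
  obtain ⟨p, hPp, hp_gcd⟩ := Finset.univ.extract_gcd P ⟨j, Finset.mem_univ j⟩
  set G := Finset.univ.gcd P
  set θ := pb.gen
  have hw_eq : ∀ i, w i = Polynomial.aeval θ G * Polynomial.aeval θ (p i) := fun i => by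
    rw [hP, hPp i (Finset.mem_univ i), map_mul]
  have hG : Polynomial.aeval θ G ≠ 0 := left_ne_zero_of_mul (hw_eq j ▸ hj)
  refine ⟨p, fun i => ?_,
    fun q hq => isUnit_of_dvd_one (hp_gcd ▸ Finset.dvd_gcd fun i _ => hq i), minpoly.dvd k _ ?_⟩
  · have hG0 : G ≠ 0 := by rintro hG0; simp [hG0] at hG
    rcases eq_or_ne (p i) 0 with h | h
    · simpa [h] using pb.dim_pos
    · have hPi := hPp i (Finset.mem_univ i)
      refine (natDegree_le_of_dvd (Dvd.intro_left _ hPi.symm) ?_).trans_lt (hP_deg i)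
      rw [hPi]
      exact mul_ne_zero hG0 h
  · have := (hφ.map (algebraMap k K)).eval_mul_left (Polynomial.aeval θ G)
      fun i => Polynomial.aeval θ (p i)
    rwa [← _root_.funext hw_eq, hw, eq_comm, mul_eq_zero, or_iff_right (pow_ne_zero _ hG),
      eval_map, ← aeval_def, ← comp_aeval_apply] at this

theorem exists_irreducible_isIsotropic_adjoinRoot (hφ : φ.IsHomogeneous d)
    (haniso : ¬ φ.IsIsotropic k) (pb : PowerBasis k K) (hdn : d.Coprime pb.dim)
    (hiso : φ.IsIsotropic K) :
    ∃ q : k[X], Irreducible q ∧ ¬ pb.dim ∣ q.natDegree ∧ ¬ d ∣ q.natDegree ∧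
      q.natDegree + pb.dim ≤ d * (pb.dim - 1) ∧ φ.IsIsotropic (AdjoinRoot q) := by
  obtain ⟨p, hp_deg, hp_coprime, hf_dvd⟩ := hiso.exists_minpoly_dvd_aeval hφ pb
  have hp0 : p ≠ 0 := fun h => not_isUnit_zero (hp_coprime 0 fun i => by simp [h])
  set e := Finset.univ.sup fun i => (p i).natDegree
  have he : e < pb.dim :=
    (Finset.sup_lt_iff (by simpa using pb.dim_pos)).mpr fun i _ => hp_deg i
  have hFe := hφ.coeff_aeval_sup_ne_zero haniso hp0
  have hFdeg : (MvPolynomial.aeval p φ).natDegree = d * e :=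
    le_antisymm (hφ.natDegree_aeval_le fun i =>
      Finset.le_sup (f := fun i => (p i).natDegree) (Finset.mem_univ i))
      (le_natDegree_of_ne_zero hFe)
  obtain ⟨g, hFg⟩ := hf_dvd
  have hg0 : g ≠ 0 := by rintro rfl; exact hFe (by simp [hFg])
  have hgdeg : g.natDegree + pb.dim = d * e := by
    rw [← hFdeg, hFg, natDegree_mul (minpoly.ne_zero pb.isIntegral_gen) hg0,
      pb.natDegree_minpoly, add_comm]
  obtain ⟨q, hq, hqg, hqn, hqd⟩ := exists_irreducible_dvd_not_dvd_natDegree hdn he hg0 hgdeg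
  refine ⟨q, hq, hqn, hqd, ?_, isIsotropic_adjoinRoot_of_dvd_aeval
    (fun h => hq.not_isUnit (hp_coprime q h)) (hFg ▸ hqg.mul_left _)⟩
  have := natDegree_le_of_dvd hqg hg0
  have : d * e ≤ d * (pb.dim - 1) := Nat.mul_le_mul_left d (by omega)
  omega

end MvPolynomial

theorem main_theorem_primes_general (k : Type) [Field k] (d N n : ℕ)
    (hdp : Nat.Prime d) (hnp : Nat.Prime n) (hnd : n ≠ d)
    (φ : MvPolynomial (Fin (N + 1)) k) (hφ : φ.IsHomogeneous d)
    (K : Type) [Field K] [Algebra k K] [FiniteDimensional k K]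
    (hKdeg : Module.finrank k K = n)
    (hiso : ∃ w : Fin (N + 1) → K, w ≠ 0 ∧
      MvPolynomial.eval w (MvPolynomial.map (algebraMap k K) φ) = 0) :
    ∃ (L : Type) (_ : Field L) (_ : Algebra k L),
      FiniteDimensional k L ∧
      Nat.gcd (Module.finrank k L) (n * d) = 1 ∧
      Module.finrank k L ≤ n * d - n - d ∧
      ∃ w : Fin (N + 1) → L, w ≠ 0 ∧
        MvPolynomial.eval w (MvPolynomial.map (algebraMap k L) φ) = 0 := by
  have hbound := hnp.add_add_one_le_mul hdp hnd
  by_cases hk : φ.IsIsotropic k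
  · exact ⟨k, inferInstance, inferInstance, inferInstance, by simp, by simp; omega, hk⟩
  obtain ⟨pb⟩ := exists_powerBasis_of_finrank_prime (hKdeg ▸ hnp)
  have hdim : pb.dim = n := pb.finrank ▸ hKdeg
  obtain ⟨q, hq, hqn, hqd, hq_deg, hq_iso⟩ :=
    MvPolynomial.exists_irreducible_isIsotropic_adjoinRoot hφ hk pb
      (hdim ▸ (Nat.coprime_primes hdp hnp).mpr hnd.symm) hiso
  rw [hdim] at hqn hq_deg
  have := Fact.mk hq
  have hq_rank : Module.finrank k (AdjoinRoot q) = q.natDegree :=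
    (AdjoinRoot.powerBasis hq.ne_zero).finrank
  refine ⟨AdjoinRoot q, inferInstance, inferInstance, (AdjoinRoot.powerBasis hq.ne_zero).finite,
    ?_, ?_, hq_iso⟩
  · rw [hq_rank]
    exact Nat.Coprime.mul_right (hnp.coprime_iff_not_dvd.mpr hqn).symm
      (hdp.coprime_iff_not_dvd.mpr hqd).symm
  · have : d * (n - 1) = n * d - d := by rw [Nat.mul_sub_one, mul_comm]
    omega

/-- **Corollary (both degrees prime).** Let `k` be a field, `d ≥ 3` prime, and `φ` a
degree-`d` form in `N+1` variables over `k`. If `φ` is isotropic over a finite extension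
`K/k` of prime degree `n ≥ 2` with `n ≠ d`, then `φ` is isotropic over some finite
extension `L/k` with `gcd([L:k], nd) = 1` and `[L:k] ≤ nd - n - d`. -/
theorem main_theorem_primes (k : Type) [Field k] (d N n : ℕ)
    (hd : 3 ≤ d) (hdp : Nat.Prime d) (hn : 2 ≤ n) (hnp : Nat.Prime n) (hnd : n ≠ d)
    (φ : MvPolynomial (Fin (N + 1)) k) (hφ : φ.IsHomogeneous d)
    (K : Type) [Field K] [Algebra k K] [FiniteDimensional k K]
    (hKdeg : Module.finrank k K = n)
    (hiso : ∃ w : Fin (N + 1) → K, w ≠ 0 ∧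
      MvPolynomial.eval w (MvPolynomial.map (algebraMap k K) φ) = 0) :
    ∃ (L : Type) (_ : Field L) (_ : Algebra k L),
      FiniteDimensional k L ∧
      Nat.gcd (Module.finrank k L) (n * d) = 1 ∧
      Module.finrank k L ≤ n * d - n - d ∧
      ∃ w : Fin (N + 1) → L, w ≠ 0 ∧
        MvPolynomial.eval w (MvPolynomial.map (algebraMap k L) φ) = 0 :=
  main_theorem_primes_general k d N n hdp hnp hnd φ hφ K hKdeg hiso
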